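/- The ten-tile slope gap pdf integrates to one: ∫₀^∞ f(t) dt = 1. -/

import Mathlib

/-- The inverse hyperbolic tangent. -/
noncomputable def artanh (x : ℝ) : ℝ := (1 / 2) * Real.log ((1 + x) / (1 - x))

/-- `θ(t) = artanh √(1 - 1/t)`. -/
noncomputable def tenTheta (t : ℝ) : ℝ := artanh (Real.sqrt (1 - 1 / t))

/-- The piecewise function `g` with `f(t) = (8/(33 t²)) g(t)` for `t ≥ 1`. -/
noncomputable def tenG (t : ℝ) : ℝ :=
  if t < 2 then 4 * Real.log t
  else if t < 3 then 12 * Real.log t - 8 * Real.log 2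
  else if t < 4 then 15 * Real.log t - 8 * Real.log 2 - 3 * Real.log 3
  else if t < 16 / 3 then
    16 * Real.log t - 10 * Real.log 2 - 3 * Real.log 3 - 8 * tenTheta (t / 4)
  else if t < 6 then
    16 * Real.log t - 10 * Real.log 2 - 3 * Real.log 3 - 8 * tenTheta (t / 4)
      - 4 * tenTheta (3 * t / 16)
  else if t < 8 then
    12 * Real.log t - 8 * Real.log 2 + Real.log 3 - 8 * tenTheta (t / 4)
      - 4 * tenTheta (t / 6)
  else if t < 9 then
    10 * Real.log t - 2 * Real.log 2 - Real.log 3 - 8 * tenTheta (t / 4)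
      - 12 * tenTheta (t / 8)
  else if t < 32 / 3 then
    10 * Real.log t - 4 * Real.log 2 - Real.log 3 - 8 * tenTheta (t / 4)
      - 8 * tenTheta (t / 8)
  else if t < 12 then
    10 * Real.log t - 4 * Real.log 2 - Real.log 3 - 8 * tenTheta (t / 4)
      - 8 * tenTheta (t / 8) - 4 * tenTheta (3 * t / 32)
  else if t < 16 then
    9 * Real.log t - 4 * Real.log 2 - 8 * tenTheta (t / 4) - 8 * tenTheta (t / 8)
      - 4 * tenTheta (t / 12)
  else
    9 * Real.log t - 4 * Real.log 2 - Real.log 3 - 8 * tenTheta (t / 4)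
      - 8 * tenTheta (t / 8) - 2 * tenTheta (t / 12)

/-- The slope gap distribution pdf of the balanced ten-tile origami. -/
noncomputable def tenTilePdf (t : ℝ) : ℝ :=
  if t < 1 then 0 else 8 / (33 * t ^ 2) * tenG t

/-!
On each interval between consecutive breakpoints,
`f t = 8 / (33 t²) * (A log t + B + ∑ kᵢ θ(t / cᵢ))` with every `cᵢ` at or below the interval.
Since `d/dt θ(t / c) = 1 / (2 t √(1 - c / t))`, such a branch has the elementary primitive
`8 / 33 * (-A (log t + 1) / t - B / t + ∑ kᵢ (-θ(t / cᵢ) / t + √(1 - cᵢ / t) / cᵢ))`.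
On `(16, ∞)` the density is nonnegative, because `θ s ≤ ½ log 4s`, and the primitive tends to
`8 / 33 * ∑ kᵢ / cᵢ`, which gives the tail. In the sum of the primitive differences the `θ`-terms
telescope wherever consecutive branches share them; what remains involves only `θ 1 = 0`,
`θ (9/8) = ½ log 2`, `θ (4/3) = ½ log 3` and the logarithms of `2` and `3`, and adds up to `1`.
-/

open Real hiding artanh
open MeasureTheory Set Filter Topology

theorem hasDerivAt_artanh {x : ℝ} (hx₁ : -1 < x) (hx₂ : x < 1) :
    HasDerivAt artanh (1 / (1 - x ^ 2)) x := by
  have hp : 1 + x ≠ 0 := by linarith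
  have hm : 1 - x ≠ 0 := by linarith
  have hlog : HasDerivAt (fun y => 1 / 2 * (log (1 + y) - log (1 - y)))
      (1 / 2 * (1 / (1 + x) - -1 / (1 - x))) x :=
    ((((hasDerivAt_id x).const_add 1).log hp).sub
      (((hasDerivAt_id x).const_sub 1).log hm)).const_mul (1 / 2)
  replace hlog := hlog.congr_deriv (show _ = 1 / (1 - x ^ 2) by
    rw [show 1 - x ^ 2 = (1 + x) * (1 - x) by ring]; field_simp; ring)
  refine hlog.congr_of_eventuallyEq ?_
  filter_upwards [Ioo_mem_nhds hx₁ hx₂] with y hy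
  rw [artanh, log_div (by linarith [hy.1]) (by linarith [hy.2])]

theorem sqrt_one_sub_div_lt_one {c t : ℝ} (hc : 0 < c) (hct : c ≤ t) : √(1 - c / t) < 1 := by
  have : 0 < c / t := div_pos hc (hc.trans_le hct)
  rw [sqrt_lt' one_pos]
  linarith

theorem hasDerivAt_one_sub_div (c : ℝ) {t : ℝ} (ht : t ≠ 0) :
    HasDerivAt (fun u => 1 - c / u) (c / t ^ 2) t := by
  refine (((hasDerivAt_const t c).div (hasDerivAt_id t) ht).const_sub 1).congr_deriv ?_
  simp only [id, zero_mul, mul_one, zero_sub, neg_div, neg_neg]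

theorem tenTheta_div_eq_artanh (c t : ℝ) : tenTheta (t / c) = artanh √(1 - c / t) := by
  rw [tenTheta, one_div_div]

theorem tenTheta_eq_half_log {s : ℝ} (hs : 1 ≤ s) :
    tenTheta s = 1 / 2 * log ((1 + √(1 - 1 / s)) ^ 2 * s) := by
  have hs₀ : 0 < s := by linarith
  rw [tenTheta, artanh]
  set x := √(1 - 1 / s)
  have hsx : s * x ^ 2 = s - 1 := by
    rw [sq_sqrt (by rw [sub_nonneg, div_le_one hs₀]; exact hs)]
    field_simp
  have hx : x < 1 := by simpa [x] using sqrt_one_sub_div_lt_one one_pos hs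
  congr 2
  rw [div_eq_iff (by linarith)]
  linear_combination (1 + x) * hsx

theorem tenTheta_nonneg {s : ℝ} (hs : 1 ≤ s) : 0 ≤ tenTheta s := by
  rw [tenTheta_eq_half_log hs]
  have : 1 ≤ (1 + √(1 - 1 / s)) ^ 2 * s := by nlinarith [sqrt_nonneg (1 - 1 / s)]
  have := log_nonneg this
  positivity

theorem tenTheta_le_half_log {s : ℝ} (hs : 1 ≤ s) : tenTheta s ≤ 1 / 2 * log (4 * s) := by
  rw [tenTheta_eq_half_log hs]
  have hx₀ := sqrt_nonneg (1 - 1 / s)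
  have hx₁ := (sqrt_one_sub_div_lt_one one_pos hs).le
  gcongr
  nlinarith

theorem tenTheta_one : tenTheta 1 = 0 := by
  norm_num [tenTheta, artanh]

theorem tenTheta_nine_eighths : tenTheta (9 / 8) = log 2 / 2 := by
  rw [tenTheta, artanh, show (1 : ℝ) - 1 / (9 / 8) = (1 / 3) ^ 2 by norm_num, sqrt_sq (by norm_num)]
  norm_num
  ring

theorem tenTheta_four_thirds : tenTheta (4 / 3) = log 3 / 2 := by
  rw [tenTheta, artanh, show (1 : ℝ) - 1 / (4 / 3) = (1 / 2) ^ 2 by norm_num, sqrt_sq (by norm_num)]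
  norm_num
  ring

theorem hasDerivAt_tenTheta_div {c t : ℝ} (hc : 0 < c) (hct : c < t) :
    HasDerivAt (fun u => tenTheta (u / c)) (1 / (2 * t * √(1 - c / t))) t := by
  have ht : t ≠ 0 := (hc.trans hct).ne'
  have hy : 0 < 1 - c / t := by rw [sub_pos, div_lt_one (hc.trans hct)]; exact hct
  have h := (hasDerivAt_artanh (by linarith [sqrt_nonneg (1 - c / t)])
    (sqrt_one_sub_div_lt_one hc hct.le)).comp t ((hasDerivAt_one_sub_div c ht).sqrt hy.ne')
  rw [show (fun u => tenTheta (u / c)) = artanh ∘ fun u => √(1 - c / u) from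
    funext (tenTheta_div_eq_artanh c)]
  refine h.congr_deriv ?_
  rw [sq_sqrt hy.le, sub_sub_cancel]
  field_simp

theorem continuousAt_tenTheta_div {c t : ℝ} (hc : 0 < c) (hct : c ≤ t) :
    ContinuousAt (fun u => tenTheta (u / c)) t := by
  have ht : t ≠ 0 := (hc.trans_le hct).ne'
  rw [show (fun u => tenTheta (u / c)) = artanh ∘ fun u => √(1 - c / u) from
    funext (tenTheta_div_eq_artanh c)]
  exact (hasDerivAt_artanh (by linarith [sqrt_nonneg (1 - c / t)])
    (sqrt_one_sub_div_lt_one hc hct)).continuousAt.comp (f := fun u => √(1 - c / u))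
    (continuousAt_const.sub (continuousAt_const.div continuousAt_id ht)).sqrt

theorem tendsto_tenTheta_div_div_atTop {c : ℝ} (hc : 0 < c) :
    Tendsto (fun t => tenTheta (t / c) / t) atTop (𝓝 0) := by
  have hlog : Tendsto (fun t => 1 / 2 * (log (4 / c) * t⁻¹ + log t / t)) atTop (𝓝 0) := by
    rw [show (0 : ℝ) = 1 / 2 * (log (4 / c) * 0 + 0) by simp]
    exact ((tendsto_inv_atTop_zero.const_mul (log (4 / c))).add
      (by simpa using isLittleO_log_id_atTop.tendsto_div_nhds_zero)).const_mul (1 / 2)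
  have hbounds : ∀ᶠ t in atTop, 0 ≤ tenTheta (t / c) / t ∧
      tenTheta (t / c) / t ≤ 1 / 2 * (log (4 / c) * t⁻¹ + log t / t) := by
    filter_upwards [eventually_ge_atTop c] with t hct
    have hs : 1 ≤ t / c := (one_le_div hc).mpr hct
    have ht : 0 < t := hc.trans_le hct
    refine ⟨div_nonneg (tenTheta_nonneg hs) ht.le, ?_⟩
    calc tenTheta (t / c) / t ≤ 1 / 2 * log (4 * (t / c)) / t := by
          gcongr; exact tenTheta_le_half_log hs
      _ = 1 / 2 * (log (4 / c) * t⁻¹ + log t / t) := by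
          rw [show 4 * (t / c) = 4 / c * t by ring, log_mul (by positivity) ht.ne']
          ring
  exact tendsto_of_tendsto_of_tendsto_of_le_of_le' tendsto_const_nhds hlog
    (hbounds.mono fun _ => And.left) (hbounds.mono fun _ => And.right)

noncomputable def logPrimitive (t : ℝ) : ℝ := -(log t + 1) / t

noncomputable def thetaPrimitive (c t : ℝ) : ℝ := -tenTheta (t / c) / t + √(1 - c / t) / c

theorem hasDerivAt_logPrimitive {t : ℝ} (ht : 0 < t) :
    HasDerivAt logPrimitive (log t / t ^ 2) t := by
  refine (((hasDerivAt_log ht.ne').add_const 1).neg.div (hasDerivAt_id t) ht.ne').congr_deriv ?_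
  simp only [id, Pi.neg_apply]
  field_simp
  ring

theorem hasDerivAt_thetaPrimitive {c t : ℝ} (hc : 0 < c) (hct : c < t) :
    HasDerivAt (thetaPrimitive c) (tenTheta (t / c) / t ^ 2) t := by
  have ht : t ≠ 0 := (hc.trans hct).ne'
  have hy : 0 < 1 - c / t := by rw [sub_pos, div_lt_one (hc.trans hct)]; exact hct
  have hx : √(1 - c / t) ≠ 0 := (sqrt_pos.mpr hy).ne'
  refine ((hasDerivAt_tenTheta_div hc hct).neg.div (hasDerivAt_id t) ht |>.add
    (((hasDerivAt_one_sub_div c ht).sqrt hy.ne').div_const c)).congr_deriv ?_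
  simp only [id, Pi.neg_apply]
  field_simp
  ring

theorem continuousAt_thetaPrimitive {c t : ℝ} (hc : 0 < c) (hct : c ≤ t) :
    ContinuousAt (thetaPrimitive c) t := by
  have ht : t ≠ 0 := (hc.trans_le hct).ne'
  exact ((continuousAt_tenTheta_div hc hct).neg.div continuousAt_id ht).add
    ((continuousAt_const.sub (continuousAt_const.div continuousAt_id ht)).sqrt.div_const c)

theorem tendsto_logPrimitive_atTop : Tendsto logPrimitive atTop (𝓝 0) := by
  have h := ((isLittleO_log_id_atTop.tendsto_div_nhds_zero).add tendsto_inv_atTop_zero).neg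
  simp only [add_zero, neg_zero] at h
  refine h.congr fun t => ?_
  simp only [logPrimitive, id]
  ring

theorem tendsto_thetaPrimitive_atTop {c : ℝ} (hc : 0 < c) :
    Tendsto (thetaPrimitive c) atTop (𝓝 c⁻¹) := by
  have hsqrt : Tendsto (fun t => √(1 - c / t)) atTop (𝓝 1) := by
    simpa using ((tendsto_const_nhds (x := (1 : ℝ))).sub
      (tendsto_const_nhds.div_atTop tendsto_id)).sqrt
  simpa using ((tendsto_tenTheta_div_div_atTop hc).neg.add (hsqrt.div_const c)).congr
    fun t => by rw [thetaPrimitive, neg_div]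

section IntegralPredicates

variable {E : Type*} [NormedAddCommGroup E] [NormedSpace ℝ E]

def HasIntervalIntegral (f : ℝ → E) (a b : ℝ) (v : E) : Prop :=
  IntervalIntegrable f volume a b ∧ ∫ x in a..b, f x = v

def HasIntegralIoi (f : ℝ → E) (a : ℝ) (v : E) : Prop :=
  IntegrableOn f (Ioi a) ∧ ∫ x in Ioi a, f x = v

theorem HasIntervalIntegral.add_hasIntegralIoi {f : ℝ → E} {a b : ℝ} {u v : E}
    (h₁ : HasIntervalIntegral f a b u) (h₂ : HasIntegralIoi f b v) :
    HasIntegralIoi f a (u + v) := by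
  refine ⟨?_, by rw [← intervalIntegral.integral_interval_add_Ioi' h₁.1 h₂.1, h₁.2, h₂.2]⟩
  rcases le_or_gt a b with hab | hba
  · rw [← Ioc_union_Ioi_eq_Ioi hab]
    exact ((intervalIntegrable_iff_integrableOn_Ioc_of_le hab).1 h₁.1).union h₂.1
  · exact h₂.1.mono_set (Ioi_subset_Ioi hba.le)

end IntegralPredicates

section Branches

variable {n : ℕ}

noncomputable def tenBranch (A B : ℝ) (k c : Fin n → ℝ) (t : ℝ) : ℝ :=
  A * log t + B + ∑ i, k i * tenTheta (t / c i)

noncomputable def tenPrimitive (A B : ℝ) (k c : Fin n → ℝ) (t : ℝ) : ℝ :=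
  8 / 33 * (A * logPrimitive t - B / t + ∑ i, k i * thetaPrimitive (c i) t)

theorem hasDerivAt_tenPrimitive {A B t : ℝ} {k c : Fin n → ℝ} (ht : 0 < t)
    (hc : ∀ i, c i ∈ Ioo 0 t) :
    HasDerivAt (tenPrimitive A B k c) (8 / (33 * t ^ 2) * tenBranch A B k c t) t := by
  have hsum := HasDerivAt.fun_sum (u := Finset.univ) fun i _ =>
    (hasDerivAt_thetaPrimitive (hc i).1 (hc i).2).const_mul (k i)
  refine ((((hasDerivAt_logPrimitive ht).const_mul A).sub
    ((hasDerivAt_const t B).div (hasDerivAt_id t) ht.ne')).add hsum).const_mul (8 / 33)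
    |>.congr_deriv ?_
  simp only [tenBranch, id, mul_add, Finset.mul_sum]
  field_simp
  ring

theorem continuousAt_tenPrimitive {A B t : ℝ} {k c : Fin n → ℝ} (ht : 0 < t)
    (hc : ∀ i, c i ∈ Ioc 0 t) : ContinuousAt (tenPrimitive A B k c) t :=
  ((((hasDerivAt_logPrimitive ht).continuousAt.const_mul A).sub
    (continuousAt_const.div continuousAt_id ht.ne')).add
    (tendsto_finsetSum _ fun i _ =>
      (continuousAt_thetaPrimitive (hc i).1 (hc i).2).const_mul (k i))).const_mul (8 / 33)

theorem continuousAt_tenBranch {A B t : ℝ} {k c : Fin n → ℝ} (ht : 0 < t)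
    (hc : ∀ i, c i ∈ Ioc 0 t) : ContinuousAt (tenBranch A B k c) t :=
  (((continuousAt_log ht.ne').const_mul A).add continuousAt_const).add
    (tendsto_finsetSum _ fun i _ =>
      (continuousAt_tenTheta_div (hc i).1 (hc i).2).const_mul (k i))

theorem tendsto_tenPrimitive_atTop {A B : ℝ} {k c : Fin n → ℝ} (hc : ∀ i, 0 < c i) :
    Tendsto (tenPrimitive A B k c) atTop (𝓝 (8 / 33 * ∑ i, k i / c i)) := by
  have h := (((tendsto_logPrimitive_atTop.const_mul A).sub
    ((tendsto_const_nhds (x := B)).div_atTop tendsto_id)).add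
    (tendsto_finsetSum Finset.univ fun i _ =>
      (tendsto_thetaPrimitive_atTop (hc i)).const_mul (k i))).const_mul (8 / 33)
  simpa [div_eq_mul_inv] using h.congr fun t => by simp only [tenPrimitive, id]

theorem tenTilePdf_eqOn_of_tenG_eqOn {s : Set ℝ} {A B : ℝ} {k c : Fin n → ℝ}
    (hs : s ⊆ Ici 1) (hg : EqOn tenG (tenBranch A B k c) s) :
    EqOn tenTilePdf (fun t => 8 / (33 * t ^ 2) * tenBranch A B k c t) s := fun x hx => by
  rw [tenTilePdf, if_neg (not_lt.2 (hs hx)), hg hx]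

theorem hasIntervalIntegral_tenTilePdf {a b A B : ℝ} {k c : Fin n → ℝ}
    (hg : EqOn tenG (tenBranch A B k c) (Ioo a b)) (hab : a ≤ b := by norm_num)
    (ha : 1 ≤ a := by norm_num) (hc : ∀ i, c i ∈ Ioc 0 a := by norm_num [Fin.forall_fin_succ]) :
    HasIntervalIntegral tenTilePdf a b (tenPrimitive A B k c b - tenPrimitive A B k c a) := by
  have hpdf := tenTilePdf_eqOn_of_tenG_eqOn (fun x hx => ha.trans hx.1.le) hg
  have hpos {x} (hx : a ≤ x) : 0 < x := by linarith
  have hc' {x} (hx : a ≤ x) (i) : c i ∈ Ioc 0 x := ⟨(hc i).1, (hc i).2.trans hx⟩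
  have hint : IntervalIntegrable (fun t => 8 / (33 * t ^ 2) * tenBranch A B k c t) volume a b :=
    ContinuousOn.intervalIntegrable_of_Icc hab fun x hx => ContinuousAt.continuousWithinAt <|
      (continuousAt_const.div (by fun_prop) (by have := hpos hx.1; positivity)).mul
        (continuousAt_tenBranch (hpos hx.1) (hc' hx.1))
  refine ⟨hint.congr_uIoo ((uIoo_of_le hab).symm ▸ hpdf.symm), ?_⟩
  rw [intervalIntegral.integral_congr_Ioo_of_le hab hpdf]
  exact intervalIntegral.integral_eq_sub_of_hasDerivAt_of_le hab
    (fun x hx => (continuousAt_tenPrimitive (hpos hx.1) (hc' hx.1)).continuousWithinAt)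
    (fun x hx => hasDerivAt_tenPrimitive (hpos hx.1.le)
      fun i => ⟨(hc i).1, (hc i).2.trans_lt hx.1⟩) hint

theorem hasIntegralIoi_tenTilePdf {a A B : ℝ} {k c : Fin n → ℝ}
    (hg : EqOn tenG (tenBranch A B k c) (Ioi a)) (hnonneg : ∀ x ∈ Ioi a, 0 ≤ tenBranch A B k c x)
    (ha : 1 ≤ a := by norm_num) (hc : ∀ i, c i ∈ Ioc 0 a := by norm_num [Fin.forall_fin_succ]) :
    HasIntegralIoi tenTilePdf a (8 / 33 * ∑ i, k i / c i - tenPrimitive A B k c a) := by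
  have hpdf := tenTilePdf_eqOn_of_tenG_eqOn (fun x hx => ha.trans (mem_Ioi.1 hx).le) hg
  have ha₀ : 0 < a := by linarith
  have hcont : ContinuousWithinAt (tenPrimitive A B k c) (Ici a) a :=
    (continuousAt_tenPrimitive ha₀ hc).continuousWithinAt
  have hderiv (x) (hx : x ∈ Ioi a) : HasDerivAt (tenPrimitive A B k c) (tenTilePdf x) x :=
    hpdf hx ▸ hasDerivAt_tenPrimitive (ha₀.trans hx) fun i => ⟨(hc i).1, (hc i).2.trans_lt hx⟩
  have hpos (x) (hx : x ∈ Ioi a) : 0 ≤ tenTilePdf x := by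
    rw [hpdf hx]
    exact mul_nonneg (by positivity) (hnonneg x hx)
  have hlim := tendsto_tenPrimitive_atTop (A := A) (B := B) (k := k) fun i => (hc i).1
  exact ⟨integrableOn_Ioi_deriv_of_nonneg hcont hderiv hpos hlim,
    integral_Ioi_of_hasDerivAt_of_nonneg hcont hderiv hpos hlim⟩

end Branches

theorem hasIntervalIntegral_tenTilePdf_zero_one : HasIntervalIntegral tenTilePdf 0 1 0 := by
  have hzero : EqOn tenTilePdf 0 (Ioo 0 1) := fun x hx => if_pos hx.2
  refine ⟨(intervalIntegrable_const (c := (0 : ℝ))).congr_uIoo ?_, ?_⟩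
  · rw [uIoo_of_le zero_le_one]
    exact hzero.symm
  · rw [intervalIntegral.integral_congr_Ioo_of_le zero_le_one hzero]
    simp

theorem tenG_eqOn_branches :
    EqOn tenG (tenBranch 4 0 ![] ![]) (Ioo 1 2) ∧
    EqOn tenG (tenBranch 12 (-8 * log 2) ![] ![]) (Ioo 2 3) ∧
    EqOn tenG (tenBranch 15 (-8 * log 2 - 3 * log 3) ![] ![]) (Ioo 3 4) ∧
    EqOn tenG (tenBranch 16 (-10 * log 2 - 3 * log 3) ![-8] ![4]) (Ioo 4 (16 / 3)) ∧
    EqOn tenG (tenBranch 16 (-10 * log 2 - 3 * log 3) ![-8, -4] ![4, 16 / 3]) (Ioo (16 / 3) 6) ∧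
    EqOn tenG (tenBranch 12 (-8 * log 2 + log 3) ![-8, -4] ![4, 6]) (Ioo 6 8) ∧
    EqOn tenG (tenBranch 10 (-2 * log 2 - log 3) ![-8, -12] ![4, 8]) (Ioo 8 9) ∧
    EqOn tenG (tenBranch 10 (-4 * log 2 - log 3) ![-8, -8] ![4, 8]) (Ioo 9 (32 / 3)) ∧
    EqOn tenG (tenBranch 10 (-4 * log 2 - log 3) ![-8, -8, -4] ![4, 8, 32 / 3]) (Ioo (32 / 3) 12) ∧
    EqOn tenG (tenBranch 9 (-4 * log 2) ![-8, -8, -4] ![4, 8, 12]) (Ioo 12 16) ∧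
    EqOn tenG (tenBranch 9 (-4 * log 2 - log 3) ![-8, -8, -2] ![4, 8, 12]) (Ioi 16) := by
  and_intros <;> intro x hx <;> simp only [mem_Ioo, mem_Ioi] at hx <;>
    simp (disch := linarith) only [tenG, tenBranch, hx, if_neg, ↓reduceIte, Fin.sum_univ_succ,
      Fin.sum_univ_zero, Matrix.cons_val_zero, Matrix.cons_val_succ] <;>
    ring_nf

theorem tenBranch_tail_nonneg (x : ℝ) (hx : x ∈ Ioi 16) :
    0 ≤ tenBranch 9 (-4 * log 2 - log 3) ![-8, -8, -2] ![4, 8, 12] x := by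
  have hx₀ : x ≠ 0 := by linarith [mem_Ioi.1 hx]
  have hθ (c : ℝ) (hc : 0 < c) (hcx : c ≤ x) :
      tenTheta (x / c) ≤ 1 / 2 * (log x - log (c / 4)) := by
    have h := tenTheta_le_half_log ((one_le_div hc).2 hcx)
    rwa [show 4 * (x / c) = x / (c / 4) by ring, log_div hx₀ (by positivity)] at h
  have h₄ := hθ 4 (by norm_num) (by linarith [mem_Ioi.1 hx])
  have h₈ := hθ 8 (by norm_num) (by linarith [mem_Ioi.1 hx])
  have h₁₂ := hθ 12 (by norm_num) (by linarith [mem_Ioi.1 hx])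
  norm_num at h₄ h₈ h₁₂
  simp only [tenBranch, Fin.sum_univ_succ, Fin.sum_univ_zero, Matrix.cons_val_zero,
    Matrix.cons_val_succ]
  linarith

open MeasureTheory in
/-- The ten-tile slope gap pdf integrates to one over `(0, ∞)`. -/
theorem tenTile_integral_eq_one : ∫ t in Set.Ioi (0 : ℝ), tenTilePdf t = 1 := by
  obtain ⟨g₁, g₂, g₃, g₄, g₅, g₆, g₇, g₈, g₉, g₁₀, g₁₁⟩ := tenG_eqOn_branches
  have h := hasIntervalIntegral_tenTilePdf_zero_one.add_hasIntegralIoi <|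
    (hasIntervalIntegral_tenTilePdf g₁).add_hasIntegralIoi <|
    (hasIntervalIntegral_tenTilePdf g₂).add_hasIntegralIoi <|
    (hasIntervalIntegral_tenTilePdf g₃).add_hasIntegralIoi <|
    (hasIntervalIntegral_tenTilePdf g₄).add_hasIntegralIoi <|
    (hasIntervalIntegral_tenTilePdf g₅).add_hasIntegralIoi <|
    (hasIntervalIntegral_tenTilePdf g₆).add_hasIntegralIoi <|
    (hasIntervalIntegral_tenTilePdf g₇).add_hasIntegralIoi <|
    (hasIntervalIntegral_tenTilePdf g₈).add_hasIntegralIoi <|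
    (hasIntervalIntegral_tenTilePdf g₉).add_hasIntegralIoi <|
    (hasIntervalIntegral_tenTilePdf g₁₀).add_hasIntegralIoi <|
    hasIntegralIoi_tenTilePdf g₁₁ tenBranch_tail_nonneg
  have l₄ : log 4 = 2 * log 2 := by
    rw [show (4 : ℝ) = 2 * 2 by norm_num, log_mul two_ne_zero two_ne_zero]; ring
  have l₆ : log 6 = log 2 + log 3 := by
    rw [show (6 : ℝ) = 2 * 3 by norm_num, log_mul two_ne_zero three_ne_zero]
  have l₈ : log 8 = 3 * log 2 := by
    rw [show (8 : ℝ) = 2 * 4 by norm_num, log_mul two_ne_zero four_ne_zero, l₄]; ring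
  have l₁₂ : log 12 = 2 * log 2 + log 3 := by
    rw [show (12 : ℝ) = 4 * 3 by norm_num, log_mul four_ne_zero three_ne_zero, l₄]
  rw [h.2]
  simp only [tenPrimitive, logPrimitive, thetaPrimitive, Fin.sum_univ_succ, Fin.sum_univ_zero,
    Matrix.cons_val_zero, Matrix.cons_val_succ]
  norm_num [tenTheta_one, tenTheta_nine_eighths, tenTheta_four_thirds, l₄, l₆, l₈, l₁₂]
  ring
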